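/- Consider single-sample SGD on the one-dimensional quadratic loss: x_{t+1} = (1-η)x_t + η A_t, where (A_t)_{t≥0} are i.i.d. real random variables with mean ā and variance σ² > 0, 0 < η < 2, and x_0 ∈ ℝ deterministic. Let A be an independent copy of A_0. Then lim_{t→∞} E[(x_t - ā)²] = η σ²/(2-η), lim_{t→∞} E[(x_t - A)²] = 2σ²/(2-η), and hence the Gradient–Noise Interaction at stationarity, defined as the ratio (lim_{t→∞} E[(x_t - A)²]) / (lim_{t→∞} E[(x_t - ā)²]), equals exactly 2/η. -/

import Mathlib

open MeasureTheory ProbabilityTheory Filter Topology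

/-! The iterate `x_t` is a measurable function of `A_0, …, A_{t-1}`, hence independent of `A_t`,
so in `x_{t+1} - ā = (1 - η)(x_t - ā) + η(A_t - ā)` the cross term has mean zero and
`e_t = E[(x_t - ā)²]` satisfies `e_{t+1} = (1 - η)² e_t + η² σ²`. As `(1 - η)² < 1` this affine
recursion converges to its fixed point `η σ² / (2 - η)`. In the same way, independence of `x_t`
and the fresh sample `A` gives `E[(x_t - A)²] = e_t + σ²`, with limit `2 σ² / (2 - η)`. -/

theorem tendsto_of_succ_eq_mul_add {r c : ℝ} {e : ℕ → ℝ} (hr : |r| < 1)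
    (he : ∀ t, e (t + 1) = r * e t + c) : Tendsto e atTop (𝓝 (c / (1 - r))) := by
  set L := c / (1 - r)
  have hL : r * L + c = L := by
    have : 1 - r ≠ 0 := by linarith [le_abs_self r]
    simp only [L]; field_simp; ring
  clear_value L
  have hclosed : ∀ t, e t = L + r ^ t * (e 0 - L) := by
    intro t
    induction t with
    | zero => simp
    | succ t ih => rw [he, ih]; linear_combination hL
  have hpow := (tendsto_pow_atTop_nhds_zero_of_abs_lt_one hr).mul_const (e 0 - L)
  simpa [← hclosed] using (tendsto_const_nhds (x := L)).add hpow

theorem measurable_iSup_lt_of_succ_eq {Ω α β : Type*} [MeasurableSpace α]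
    [mβ : MeasurableSpace β] {A : ℕ → Ω → β} {x : ℕ → Ω → α} {F : α → β → α}
    (hF : Measurable (Function.uncurry F)) (x₀ : α) (hx0 : ∀ ω, x 0 ω = x₀)
    (hstep : ∀ t ω, x (t + 1) ω = F (x t ω) (A t ω)) (t : ℕ) :
    Measurable[⨆ i < t, mβ.comap (A i)] (x t) := by
  induction t with
  | zero => simp [funext hx0]
  | succ t ih =>
    have hx : Measurable[⨆ i < t + 1, mβ.comap (A i)] (x t) :=
      ih.mono (biSup_mono fun i hi => by omega) le_rfl
    have hA : Measurable[⨆ i < t + 1, mβ.comap (A i)] (A t) :=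
      (comap_measurable (A t)).mono (le_iSup₂_of_le t (by omega) le_rfl) le_rfl
    rw [funext (hstep t)]
    exact hF.comp (hx.prodMk hA)

section
variable {Ω : Type*} [MeasurableSpace Ω] {μ : Measure Ω}

theorem ProbabilityTheory.iIndepFun.indepFun_of_measurable_iSup_lt {β γ : Type*}
    [mβ : MeasurableSpace β] [MeasurableSpace γ] {A : ℕ → Ω → β} (hA : ∀ i, Measurable (A i))
    (hind : iIndepFun A μ) {t : ℕ} {f : Ω → γ}
    (hf : Measurable[⨆ i < t, mβ.comap (A i)] f) : IndepFun f (A t) μ := by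
  rw [IndepFun_iff_Indep]
  have hpast := indep_iSup_of_disjoint (fun i => (hA i).comap_le) hind.iIndep
    (S := Set.Iio t) (T := {t}) (by simp)
  simp only [Set.mem_Iio, Set.mem_singleton_iff, iSup_iSup_eq_left] at hpast
  exact indep_of_indep_of_le_left hpast hf.comap_le

theorem memLp_of_succ_eq_mul_add_mul [IsFiniteMeasure μ] {p : ENNReal} {A x : ℕ → Ω → ℝ}
    {a b : ℝ} (hA : ∀ t, MemLp (A t) p μ) (x₀ : ℝ) (hx0 : ∀ ω, x 0 ω = x₀)
    (hstep : ∀ t ω, x (t + 1) ω = a * x t ω + b * A t ω) (t : ℕ) : MemLp (x t) p μ := by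
  induction t with
  | zero => simpa [funext hx0] using memLp_const x₀
  | succ t ih => rw [funext (hstep t)]; exact (ih.const_mul a).add ((hA t).const_mul b)

theorem ProbabilityTheory.IndepFun.integral_add_sq_of_integral_eq_zero [IsFiniteMeasure μ]
    {f g : Ω → ℝ} (hfg : IndepFun f g μ) (hf : MemLp f 2 μ) (hg : MemLp g 2 μ)
    (hg0 : ∫ ω, g ω ∂μ = 0) :
    ∫ ω, (f ω + g ω) ^ 2 ∂μ = ∫ ω, f ω ^ 2 ∂μ + ∫ ω, g ω ^ 2 ∂μ := by
  have hcross : ∫ ω, 2 * (f ω * g ω) ∂μ = 0 := by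
    rw [integral_const_mul, hfg.integral_fun_mul_eq_mul_integral hf.aestronglyMeasurable
      hg.aestronglyMeasurable, hg0, mul_zero, mul_zero]
  have hfgi : Integrable (fun ω => 2 * (f ω * g ω)) μ :=
    ((hfg.integrable_mul (hf.integrable one_le_two) (hg.integrable one_le_two))).const_mul 2
  have hsum : Integrable (fun ω => f ω ^ 2 + 2 * (f ω * g ω)) μ := hf.integrable_sq.add hfgi
  calc ∫ ω, (f ω + g ω) ^ 2 ∂μ = ∫ ω, (f ω ^ 2 + 2 * (f ω * g ω) + g ω ^ 2) ∂μ := by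
        congr 1 with ω; ring
    _ = ∫ ω, f ω ^ 2 ∂μ + ∫ ω, g ω ^ 2 ∂μ := by
        rw [integral_add hsum hg.integrable_sq,
          integral_add hf.integrable_sq hfgi, hcross, add_zero]

section
variable [IsProbabilityMeasure μ] {X Y : Ω → ℝ} {a s : ℝ}

theorem ProbabilityTheory.IndepFun.integral_sq_convexComb_sub_mean (hXY : IndepFun X Y μ)
    (hX : MemLp X 2 μ) (hY : MemLp Y 2 μ) (hmean : ∫ ω, Y ω ∂μ = a)
    (hvar : ∫ ω, (Y ω - a) ^ 2 ∂μ = s) (η : ℝ) :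
    ∫ ω, ((1 - η) * X ω + η * Y ω - a) ^ 2 ∂μ
      = (1 - η) ^ 2 * ∫ ω, (X ω - a) ^ 2 ∂μ + η ^ 2 * s := by
  have hindep : IndepFun (fun ω => (1 - η) * (X ω - a)) (fun ω => η * (Y ω - a)) μ :=
    hXY.comp (by fun_prop : Measurable fun y => (1 - η) * (y - a))
      (by fun_prop : Measurable fun y => η * (y - a))
  have hcentered : ∫ ω, η * (Y ω - a) ∂μ = 0 := by
    rw [integral_const_mul, integral_sub (hY.integrable one_le_two) (integrable_const a), hmean]
    simp
  calc ∫ ω, ((1 - η) * X ω + η * Y ω - a) ^ 2 ∂μ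
      = ∫ ω, ((1 - η) * (X ω - a) + η * (Y ω - a)) ^ 2 ∂μ := by congr 1 with ω; ring
    _ = (1 - η) ^ 2 * ∫ ω, (X ω - a) ^ 2 ∂μ + η ^ 2 * s := by
      rw [hindep.integral_add_sq_of_integral_eq_zero ((hX.sub (memLp_const a)).const_mul _)
        ((hY.sub (memLp_const a)).const_mul _) hcentered]
      simp only [mul_pow, integral_const_mul, hvar]

theorem ProbabilityTheory.IndepFun.integral_sq_sub_eq_integral_sq_sub_add (hXY : IndepFun X Y μ)
    (hX : MemLp X 2 μ) (hY : MemLp Y 2 μ) (hmean : ∫ ω, Y ω ∂μ = a)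
    (hvar : ∫ ω, (Y ω - a) ^ 2 ∂μ = s) :
    ∫ ω, (X ω - Y ω) ^ 2 ∂μ = ∫ ω, (X ω - a) ^ 2 ∂μ + s := by
  have hindep : IndepFun (fun ω => X ω - a) (fun ω => a - Y ω) μ :=
    hXY.comp (by fun_prop : Measurable fun y => y - a) (by fun_prop : Measurable fun y => a - y)
  have hcentered : ∫ ω, (a - Y ω) ∂μ = 0 := by
    rw [integral_sub (integrable_const a) (hY.integrable one_le_two), hmean]
    simp
  calc ∫ ω, (X ω - Y ω) ^ 2 ∂μ = ∫ ω, ((X ω - a) + (a - Y ω)) ^ 2 ∂μ := by congr 1 with ω; ring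
    _ = ∫ ω, (X ω - a) ^ 2 ∂μ + s := by
      rw [hindep.integral_add_sq_of_integral_eq_zero (hX.sub (memLp_const a))
        ((memLp_const a).sub hY) hcentered, ← hvar]
      congr 2 with ω; ring

end

end

theorem sgd_1d_gni_at_stationarity_general
    {Ω : Type*} [MeasurableSpace Ω] {μ : Measure Ω} [IsProbabilityMeasure μ]
    (A : ℕ → Ω → ℝ)
    (hmeas : ∀ t, Measurable (A t))
    (hindep : iIndepFun A μ)
    (hL2 : ∀ t, MemLp (A t) 2 μ)
    (abar σ2 : ℝ)
    (hmean : ∀ t, ∫ ω, A t ω ∂μ = abar)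
    (hvar : ∀ t, ∫ ω, (A t ω - abar) ^ 2 ∂μ = σ2)
    (hσ2 : 0 < σ2)
    (η x₀ : ℝ) (hη0 : 0 < η) (hη2 : η < 2)
    (x : ℕ → Ω → ℝ)
    (hx0 : ∀ ω, x 0 ω = x₀)
    (hstep : ∀ t ω, x (t + 1) ω = (1 - η) * x t ω + η * A t ω)
    -- `Aind` is an independent copy of `A 0`:
    (Aind : Ω → ℝ) (hAmeas : Measurable Aind)
    (hAcopy : Measure.map Aind μ = Measure.map (A 0) μ)
    (hAindep : ∀ t, IndepFun (x t) Aind μ) :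
    Tendsto (fun t => ∫ ω, (x t ω - abar) ^ 2 ∂μ) atTop (𝓝 (η * σ2 / (2 - η))) ∧
    Tendsto (fun t => ∫ ω, (x t ω - Aind ω) ^ 2 ∂μ) atTop (𝓝 (2 * σ2 / (2 - η))) ∧
    (2 * σ2 / (2 - η)) / (η * σ2 / (2 - η)) = 2 / η := by
  have h2η : 2 - η ≠ 0 := by linarith
  have hxA : ∀ t, IndepFun (x t) (A t) μ := fun t =>
    hindep.indepFun_of_measurable_iSup_lt hmeas <| measurable_iSup_lt_of_succ_eq
      (F := fun y a => (1 - η) * y + η * a) (by fun_prop) x₀ hx0 hstep t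
  have hxL2 : ∀ t, MemLp (x t) 2 μ := memLp_of_succ_eq_mul_add_mul hL2 x₀ hx0 hstep
  have hAid : IdentDistrib Aind (A 0) μ μ := ⟨hAmeas.aemeasurable, (hmeas 0).aemeasurable, hAcopy⟩
  have hAmean : ∫ ω, Aind ω ∂μ = abar := hAid.integral_eq.trans (hmean 0)
  have hAvar : ∫ ω, (Aind ω - abar) ^ 2 ∂μ = σ2 :=
    (hAid.comp (by fun_prop : Measurable fun y => (y - abar) ^ 2)).integral_eq.trans (hvar 0)
  have hlim : Tendsto (fun t => ∫ ω, (x t ω - abar) ^ 2 ∂μ) atTop (𝓝 (η * σ2 / (2 - η))) := by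
    have hr : |(1 - η) ^ 2| < 1 := by rw [abs_of_nonneg (sq_nonneg _)]; nlinarith
    have hrec : ∀ t, ∫ ω, (x (t + 1) ω - abar) ^ 2 ∂μ
        = (1 - η) ^ 2 * ∫ ω, (x t ω - abar) ^ 2 ∂μ + η ^ 2 * σ2 := fun t => by
      simp_rw [hstep]
      exact (hxA t).integral_sq_convexComb_sub_mean (hxL2 t) (hL2 t) (hmean t) (hvar t) η
    have hL : η ^ 2 * σ2 / (1 - (1 - η) ^ 2) = η * σ2 / (2 - η) := by
      rw [show 1 - (1 - η) ^ 2 = η * (2 - η) by ring]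
      field_simp
    simpa only [hL] using
      tendsto_of_succ_eq_mul_add (e := fun t => ∫ ω, (x t ω - abar) ^ 2 ∂μ) hr hrec
  refine ⟨hlim, ?_, by field_simp⟩
  have hgap : ∀ t, ∫ ω, (x t ω - Aind ω) ^ 2 ∂μ = ∫ ω, (x t ω - abar) ^ 2 ∂μ + σ2 := fun t =>
    (hAindep t).integral_sq_sub_eq_integral_sq_sub_add (hxL2 t) (hAid.memLp_iff.2 (hL2 0))
      hAmean hAvar
  simp_rw [hgap]
  convert hlim.add_const σ2 using 2
  field_simp; ring

/-- Single-sample SGD on the 1-d quadratic loss with `0 < η < 2`: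
the stationary second moment of `x_t - abar` is `η σ² / (2 - η)`, the stationary
per-sample loss-type moment `E[(x_t - A)²]` (with `A` an independent copy of `A_0`)
is `2σ²/(2-η)`, and hence the Gradient–Noise Interaction at stationarity equals `2/η`. -/
theorem sgd_1d_gni_at_stationarity
    {Ω : Type*} [MeasurableSpace Ω] {μ : Measure Ω} [IsProbabilityMeasure μ]
    (A : ℕ → Ω → ℝ)
    (hmeas : ∀ t, Measurable (A t))
    (hindep : iIndepFun A μ)
    (hident : ∀ s t, Measure.map (A s) μ = Measure.map (A t) μ)
    (hL2 : ∀ t, MemLp (A t) 2 μ)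
    (abar σ2 : ℝ)
    (hmean : ∀ t, ∫ ω, A t ω ∂μ = abar)
    (hvar : ∀ t, ∫ ω, (A t ω - abar) ^ 2 ∂μ = σ2)
    (hσ2 : 0 < σ2)
    (η x₀ : ℝ) (hη0 : 0 < η) (hη2 : η < 2)
    (x : ℕ → Ω → ℝ)
    (hx0 : ∀ ω, x 0 ω = x₀)
    (hstep : ∀ t ω, x (t + 1) ω = (1 - η) * x t ω + η * A t ω)
    -- `Aind` is an independent copy of `A 0`:
    (Aind : Ω → ℝ) (hAmeas : Measurable Aind)
    (hAcopy : Measure.map Aind μ = Measure.map (A 0) μ)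
    (hAindep : ∀ t, IndepFun (x t) Aind μ) :
    Tendsto (fun t => ∫ ω, (x t ω - abar) ^ 2 ∂μ) atTop (𝓝 (η * σ2 / (2 - η))) ∧
    Tendsto (fun t => ∫ ω, (x t ω - Aind ω) ^ 2 ∂μ) atTop (𝓝 (2 * σ2 / (2 - η))) ∧
    (2 * σ2 / (2 - η)) / (η * σ2 / (2 - η)) = 2 / η :=
  sgd_1d_gni_at_stationarity_general A hmeas hindep hL2 abar σ2 hmean hvar hσ2 η x₀ hη0 hη2 x hx0
    hstep Aind hAmeas hAcopy hAindep
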